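/- Let f : ℝ^d → ℝ be convex and differentiable and satisfy the block-Lipschitz assumption with resulting constant L. Then for all x, y ∈ ℝ^d: ‖∇f(y) − ∇f(x)‖² ≤ 2L (f(y) − f(x) − ⟨∇f(x), y − x⟩). -/

import Mathlib

/-!
Let `v = a - b` and let `T_k v` be `v` restricted to the blocks `≥ k`. The points `a - T_k v`,
`k = 0, …, m`, run from `b` to `a`, changing one block at a time. On the `j`-th leg, `a` minus the
current point is `(1 - t) T_j v + t T_{j+1} v`, so the block-Lipschitz bound for block `j` and the
convexity of the seminorm `‖·‖_{Q^j}` bound the `j`-th block of `∇f a - ∇f` there by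
`(1 - t) α_j + t β_j`, where `α_j = ‖T_j v‖_{Q^j}` and `β_j = ‖T_{j+1} v‖_{Q^j}`. Integrating over
the leg and summing with Cauchy–Schwarz, using `((α_j + β_j) / 2)² ≤ (α_j² + β_j²) / 2` and
`∑ (α_j² + β_j²) = ‖v‖²_{Q̃}`, gives the descent lemma
`f b ≤ f a + ⟪∇f a, b - a⟫ + (L / 2) ‖b - a‖²`.

For convex `f` the claim follows as usual: the descent lemma at `(y, y - u)` and the gradient
inequality at `(x, y - u)` give `⟪∇f y - ∇f x, u⟫ - (L / 2) ‖u‖² ≤ f y - f x - ⟪∇f x, y - x⟫` for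
every `u`, and one takes `u = (∇f y - ∇f x) / L`.
-/

noncomputable section
open MeasureTheory Finset Set RealInnerProductSpace

abbrev Euc (d : ℕ) := EuclideanSpace ℝ (Fin d)

def blockMask {d m : ℕ} (blk : Fin d → Fin m) (j : Fin m) (z : Euc d) : Euc d :=
  (EuclideanSpace.equiv (Fin d) ℝ).symm fun i => if blk i = j then z i else 0

def blockCombine {d m : ℕ} (blk : Fin d → Fin m) (j : ℕ) (x y : Euc d) : Euc d :=
  (EuclideanSpace.equiv (Fin d) ℝ).symm fun i => if (blk i : ℕ) + 1 ≤ j then x i else y i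

def quadForm {d : ℕ} (Q : Matrix (Fin d) (Fin d) ℝ) (z : Euc d) : ℝ :=
  ∑ i, ∑ i', Q i i' * z i * z i'

def keepGE {d m : ℕ} (blk : Fin d → Fin m) (j : ℕ) (Q : Matrix (Fin d) (Fin d) ℝ) :
    Matrix (Fin d) (Fin d) ℝ :=
  Matrix.of fun i i' => if j ≤ (blk i : ℕ) + 1 ∧ j ≤ (blk i' : ℕ) + 1 then Q i i' else 0

def Qtilde {d m : ℕ} (blk : Fin d → Fin m) (Q : Fin m → Matrix (Fin d) (Fin d) ℝ) :
    Matrix (Fin d) (Fin d) ℝ :=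
  ∑ j : Fin m, (keepGE blk ((j : ℕ) + 1) (Q j) + keepGE blk ((j : ℕ) + 2) (Q j))

def specNorm {d : ℕ} (Q : Matrix (Fin d) (Fin d) ℝ) : ℝ :=
  ‖Matrix.toEuclideanCLM (𝕜 := ℝ) Q‖

def bigL {d m : ℕ} (blk : Fin d → Fin m) (Q : Fin m → Matrix (Fin d) (Fin d) ℝ) : ℝ :=
  Real.sqrt (2 * specNorm (Qtilde blk Q))

def BlockLip {d m : ℕ} (blk : Fin d → Fin m) (f : Euc d → ℝ)
    (Q : Fin m → Matrix (Fin d) (Fin d) ℝ) : Prop :=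
  ∀ (j : Fin m) (x y : Euc d),
    ‖blockMask blk j (gradient f x) - blockMask blk j (gradient f y)‖ ^ 2 ≤
      quadForm (Q j) (x - y)

def SubgradStrongConvex {d : ℕ} (γ : ℝ) (g : Euc d → ℝ) : Prop :=
  ∀ x y s : Euc d, (∀ z, g x + ⟪s, z - x⟫ ≤ g z) →
    g x + ⟪s, y - x⟫ + γ / 2 * ‖y - x‖ ^ 2 ≤ g y


section BlockMasks

variable {d m : ℕ} (blk : Fin d → Fin m)

def blockTail (k : ℕ) (z : Euc d) : Euc d :=
  (EuclideanSpace.equiv (Fin d) ℝ).symm fun i => if k ≤ (blk i : ℕ) then z i else 0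

@[simp]
lemma blockTail_apply (k : ℕ) (z : Euc d) (i : Fin d) :
    blockTail blk k z i = if k ≤ (blk i : ℕ) then z i else 0 := rfl

@[simp]
lemma blockMask_apply (j : Fin m) (z : Euc d) (i : Fin d) :
    blockMask blk j z i = if blk i = j then z i else 0 := rfl

lemma blockTail_zero (z : Euc d) : blockTail blk 0 z = z := by
  ext i; simp

lemma blockTail_of_le {k : ℕ} (hk : m ≤ k) (z : Euc d) : blockTail blk k z = 0 := by
  ext i
  simp [not_le.mpr ((blk i).is_lt.trans_le hk)]

lemma blockTail_sub_blockTail_succ (j : Fin m) (z : Euc d) :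
    blockTail blk j z - blockTail blk (j + 1) z = blockMask blk j z := by
  ext i
  simp only [PiLp.sub_apply, blockTail_apply, blockMask_apply, Fin.ext_iff]
  split_ifs <;> simp <;> omega

lemma blockMask_sub (j : Fin m) (x y : Euc d) :
    blockMask blk j (x - y) = blockMask blk j x - blockMask blk j y := by
  ext i
  simp only [PiLp.sub_apply, blockMask_apply]
  split_ifs <;> simp

lemma inner_blockMask_right (j : Fin m) (x z : Euc d) :
    ⟪x, blockMask blk j z⟫ = ⟪blockMask blk j x, blockMask blk j z⟫ := by
  simp only [PiLp.inner_apply, blockMask_apply]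
  refine Finset.sum_congr rfl fun i _ => ?_
  split_ifs <;> simp

lemma sum_blockMask (z : Euc d) : ∑ j, blockMask blk j z = z := by
  ext i
  simp [WithLp.ofLp_sum]

lemma sum_norm_sq_blockMask (z : Euc d) : ∑ j, ‖blockMask blk j z‖ ^ 2 = ‖z‖ ^ 2 := by
  simp only [EuclideanSpace.norm_sq_eq, blockMask_apply, Real.norm_eq_abs, sq_abs]
  rw [Finset.sum_comm]
  refine Finset.sum_congr rfl fun i _ => ?_
  simp [apply_ite (· ^ 2)]

lemma quadForm_keepGE_succ (k : ℕ) (Q : Matrix (Fin d) (Fin d) ℝ) (z : Euc d) :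
    quadForm (keepGE blk (k + 1) Q) z = quadForm Q (blockTail blk k z) := by
  simp only [quadForm, keepGE, Matrix.of_apply, blockTail_apply, Nat.add_le_add_iff_right]
  refine Finset.sum_congr rfl fun i _ => Finset.sum_congr rfl fun i' _ => ?_
  split_ifs <;> simp_all

end BlockMasks

section QuadForm

variable {d : ℕ}

lemma quadForm_eq_inner (Q : Matrix (Fin d) (Fin d) ℝ) (z : Euc d) :
    quadForm Q z = ⟪z, Matrix.toEuclideanCLM (𝕜 := ℝ) Q z⟫ := by
  simp only [quadForm, PiLp.inner_apply, Matrix.ofLp_toEuclideanCLM, Matrix.mulVec, dotProduct,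
    RCLike.inner_apply, conj_trivial, Finset.sum_mul]
  exact Finset.sum_congr rfl fun i _ => Finset.sum_congr rfl fun i' _ => by ring

lemma quadForm_add (P R : Matrix (Fin d) (Fin d) ℝ) (z : Euc d) :
    quadForm (P + R) z = quadForm P z + quadForm R z := by
  simp only [quadForm_eq_inner, map_add, add_apply, inner_add_right]

lemma quadForm_sum {ι : Type*} (s : Finset ι) (P : ι → Matrix (Fin d) (Fin d) ℝ) (z : Euc d) :
    quadForm (∑ j ∈ s, P j) z = ∑ j ∈ s, quadForm (P j) z := by
  simp only [quadForm_eq_inner, map_sum, _root_.sum_apply, inner_sum]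

lemma quadForm_le_specNorm (Q : Matrix (Fin d) (Fin d) ℝ) (z : Euc d) :
    quadForm Q z ≤ specNorm Q * ‖z‖ ^ 2 := by
  rw [quadForm_eq_inner]
  calc ⟪z, Matrix.toEuclideanCLM (𝕜 := ℝ) Q z⟫ ≤ ‖z‖ * ‖Matrix.toEuclideanCLM (𝕜 := ℝ) Q z‖ :=
        real_inner_le_norm _ _
    _ ≤ ‖z‖ * (specNorm Q * ‖z‖) := by
        gcongr; exact (Matrix.toEuclideanCLM (𝕜 := ℝ) Q).le_opNorm z
    _ = specNorm Q * ‖z‖ ^ 2 := by ring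

lemma Matrix.PosSemidef.exists_quadForm_eq_sq_norm {Q : Matrix (Fin d) (Fin d) ℝ}
    (hQ : Q.PosSemidef) : ∃ A : Euc d →L[ℝ] Euc d, ∀ z, quadForm Q z = ‖A z‖ ^ 2 := by
  open scoped MatrixOrder in
  obtain ⟨B, rfl⟩ := CStarAlgebra.nonneg_iff_eq_star_mul_self.mp hQ.nonneg
  refine ⟨Matrix.toEuclideanCLM (𝕜 := ℝ) B, fun z => ?_⟩
  rw [quadForm_eq_inner, map_mul, map_star, ContinuousLinearMap.star_eq_adjoint,
    mul_apply_eq_comp, ContinuousLinearMap.adjoint_inner_right,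
    real_inner_self_eq_norm_sq]

lemma Matrix.PosSemidef.quadForm_nonneg {Q : Matrix (Fin d) (Fin d) ℝ} (hQ : Q.PosSemidef)
    (z : Euc d) : 0 ≤ quadForm Q z := by
  obtain ⟨A, hA⟩ := hQ.exists_quadForm_eq_sq_norm
  rw [hA]
  positivity

lemma Matrix.PosSemidef.sqrt_quadForm_convex_comb_le {Q : Matrix (Fin d) (Fin d) ℝ}
    (hQ : Q.PosSemidef) {t : ℝ} (ht₀ : 0 ≤ t) (ht₁ : t ≤ 1) (x y : Euc d) :
    √(quadForm Q ((1 - t) • x + t • y)) ≤ (1 - t) * √(quadForm Q x) + t * √(quadForm Q y) := by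
  obtain ⟨A, hA⟩ := hQ.exists_quadForm_eq_sq_norm
  simp only [hA, Real.sqrt_sq (norm_nonneg _), map_add, map_smul]
  refine (norm_add_le _ _).trans_eq ?_
  rw [norm_smul, norm_smul, Real.norm_of_nonneg (sub_nonneg.mpr ht₁), Real.norm_of_nonneg ht₀]

end QuadForm

section Calculus

lemma sub_le_sub_of_hasDerivAt_le {φ ψ φ' ψ' : ℝ → ℝ} {a b : ℝ} (hab : a ≤ b)
    (hφ : ∀ t, HasDerivAt φ (φ' t) t) (hψ : ∀ t, HasDerivAt ψ (ψ' t) t)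
    (hle : ∀ t ∈ Set.Ioo a b, ψ' t ≤ φ' t) : ψ b - ψ a ≤ φ b - φ a := by
  rcases hab.eq_or_lt with rfl | hab
  · simp
  have hderiv : ∀ t, HasDerivAt (fun s => φ s - ψ s) (φ' t - ψ' t) t := fun t =>
    (hφ t).sub (hψ t)
  obtain ⟨c, hc, hslope⟩ := exists_hasDerivAt_eq_slope _ _ hab
    (fun t _ => (hderiv t).continuousAt.continuousWithinAt) (fun t _ => hderiv t)
  have : 0 ≤ (φ b - ψ b - (φ a - ψ a)) / (b - a) := hslope ▸ sub_nonneg.mpr (hle c hc)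
  rw [le_div_iff₀ (sub_pos.mpr hab), zero_mul] at this
  linarith

lemma sub_avg_le_sub_of_hasDerivAt {φ φ' : ℝ → ℝ} (hφ : ∀ t, HasDerivAt φ (φ' t) t)
    {c α β : ℝ} (hle : ∀ t ∈ Set.Ioo (0 : ℝ) 1, c - ((1 - t) * α + t * β) ≤ φ' t) :
    c - (α + β) / 2 ≤ φ 1 - φ 0 := by
  have hψ : ∀ t : ℝ, HasDerivAt (fun s => c * s - (s - s ^ 2 / 2) * α - s ^ 2 / 2 * β)
      (c - ((1 - t) * α + t * β)) t := fun t => by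
    have hsq := (hasDerivAt_pow 2 t).div_const 2
    have := (((hasDerivAt_id t).const_mul c).sub (((hasDerivAt_id t).sub hsq).mul_const α)).sub
      (hsq.mul_const β)
    exact this.congr_deriv (by ring)
  have := sub_le_sub_of_hasDerivAt_le zero_le_one hφ hψ hle
  linarith

variable {E : Type*} [NormedAddCommGroup E] [InnerProductSpace ℝ E]

lemma sq_norm_le_of_forall_inner_sub_le {g : E} {L D : ℝ} (hL : 0 ≤ L)
    (h : ∀ u : E, ⟪g, u⟫ - L / 2 * ‖u‖ ^ 2 ≤ D) : ‖g‖ ^ 2 ≤ 2 * L * D := by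
  have hray : ∀ t : ℝ, t * ‖g‖ ^ 2 - L / 2 * t ^ 2 * ‖g‖ ^ 2 ≤ D := fun t => by
    simpa [real_inner_smul_right, real_inner_self_eq_norm_sq, norm_smul, mul_pow, mul_assoc]
      using h (t • g)
  rcases hL.eq_or_lt with rfl | hL
  · suffices ‖g‖ ^ 2 ≤ 0 by simpa using this
    by_contra! hg
    have := hray ((D + 1) / ‖g‖ ^ 2)
    rw [zero_div, zero_mul, zero_mul, sub_zero, div_mul_cancel₀ _ hg.ne'] at this
    linarith
  · have := hray (1 / L)
    field_simp at this
    linarith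

variable [CompleteSpace E]

lemma hasDerivAt_comp_add_smul {f : E → ℝ} (hf : Differentiable ℝ f) (x w : E) (t : ℝ) :
    HasDerivAt (fun s : ℝ => f (x + s • w)) ⟪gradient f (x + t • w), w⟫ t := by
  have hline : HasDerivAt (fun s : ℝ => x + s • w) w t := by
    simpa using ((hasDerivAt_id t).smul_const w).const_add x
  exact (hf _).hasGradientAt.hasFDerivAt.comp_hasDerivAt t hline

lemma ConvexOn.add_inner_gradient_le {f : E → ℝ} (hconv : ConvexOn ℝ Set.univ f)
    (hdiff : Differentiable ℝ f) (x z : E) : f x + ⟪gradient f x, z - x⟫ ≤ f z := by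
  have hline : ConvexOn ℝ Set.univ fun t : ℝ => f (x + t • (z - x)) := by
    have := hconv.comp_affineMap (AffineMap.lineMap x z)
    simpa [Function.comp_def, AffineMap.lineMap_apply_module', add_comm] using this
  have := hline.le_slope_of_hasDerivAt (Set.mem_univ 0) (Set.mem_univ 1) one_pos
    (hasDerivAt_comp_add_smul hdiff x (z - x) 0)
  rw [slope_def_field] at this
  simp only [zero_smul, one_smul, add_zero, add_sub_cancel, sub_zero, div_one] at this
  linarith

theorem sq_norm_gradient_sub_le_of_convexOn {f : E → ℝ} {L : ℝ} (hL : 0 ≤ L)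
    (hconv : ConvexOn ℝ Set.univ f) (hdiff : Differentiable ℝ f)
    (hdesc : ∀ a b, f b ≤ f a + ⟪gradient f a, b - a⟫ + L / 2 * ‖b - a‖ ^ 2) (x y : E) :
    ‖gradient f y - gradient f x‖ ^ 2 ≤ 2 * L * (f y - f x - ⟪gradient f x, y - x⟫) := by
  refine sq_norm_le_of_forall_inner_sub_le hL fun u => ?_
  have hlow := hconv.add_inner_gradient_le hdiff x (y - u)
  have hup := hdesc y (y - u)
  rw [show y - u - x = (y - x) - u by abel, inner_sub_right] at hlow
  rw [show y - u - y = -u by abel, inner_neg_right, norm_neg] at hup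
  rw [inner_sub_left]
  linarith

end Calculus

section BlockDescent

variable {d m : ℕ} {blk : Fin d → Fin m} {f : Euc d → ℝ} {Q : Fin m → Matrix (Fin d) (Fin d) ℝ}

lemma BlockLip.norm_blockMask_gradient_sub_le (hpsd : ∀ j, (Q j).PosSemidef)
    (hlip : BlockLip blk f Q) (j : Fin m) (a x y : Euc d) {t : ℝ} (ht₀ : 0 ≤ t) (ht₁ : t ≤ 1) :
    ‖blockMask blk j (gradient f a - gradient f (a - ((1 - t) • x + t • y)))‖ ≤
      (1 - t) * √(quadForm (Q j) x) + t * √(quadForm (Q j) y) := by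
  refine le_trans ?_ ((hpsd j).sqrt_quadForm_convex_comb_le ht₀ ht₁ x y)
  apply Real.le_sqrt_of_sq_le
  rw [blockMask_sub]
  simpa only [sub_sub_cancel] using hlip j a (a - ((1 - t) • x + t • y))

lemma BlockLip.inner_blockMask_sub_le_sub (hdiff : Differentiable ℝ f)
    (hpsd : ∀ j, (Q j).PosSemidef) (hlip : BlockLip blk f Q) (a v : Euc d) (j : Fin m) :
    ⟪gradient f a, blockMask blk j v⟫ -
        (√(quadForm (Q j) (blockTail blk j v)) + √(quadForm (Q j) (blockTail blk (j + 1) v))) / 2 *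
          ‖blockMask blk j v‖ ≤
      f (a - blockTail blk (j + 1) v) - f (a - blockTail blk j v) := by
  set w := blockMask blk j v
  set x := blockTail blk j v
  set y := blockTail blk (j + 1) v
  have hxy : x - y = w := blockTail_sub_blockTail_succ blk j v
  have hseg : ∀ t : ℝ, a - x + t • w = a - ((1 - t) • x + t • y) := fun t => by
    rw [← hxy]; module
  have hend : a - x + w = a - y := by rw [← hxy]; abel
  have hlow : ∀ t ∈ Set.Ioo (0 : ℝ) 1, ⟪gradient f a, w⟫ -
      ((1 - t) * (√(quadForm (Q j) x) * ‖w‖) + t * (√(quadForm (Q j) y) * ‖w‖)) ≤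
        ⟪gradient f (a - x + t • w), w⟫ := fun t ht => by
    have hmask := hlip.norm_blockMask_gradient_sub_le hpsd j a x y ht.1.le ht.2.le
    rw [hseg]
    have : ⟪gradient f a - gradient f (a - ((1 - t) • x + t • y)), w⟫ ≤
        ((1 - t) * √(quadForm (Q j) x) + t * √(quadForm (Q j) y)) * ‖w‖ := by
      rw [inner_blockMask_right]
      exact (real_inner_le_norm _ _).trans (by gcongr)
    rw [inner_sub_left] at this
    linarith
  have := sub_avg_le_sub_of_hasDerivAt (hasDerivAt_comp_add_smul hdiff (a - x) w) hlow
  rw [one_smul, zero_smul, add_zero, hend] at this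
  linarith

lemma sum_sqrt_quadForm_blockTail_mul_norm_le (hpsd : ∀ j, (Q j).PosSemidef) (v : Euc d) :
    ∑ j, (√(quadForm (Q j) (blockTail blk j v)) + √(quadForm (Q j) (blockTail blk (j + 1) v))) /
        2 * ‖blockMask blk j v‖ ≤ bigL blk Q / 2 * ‖v‖ ^ 2 := by
  set α := fun j : Fin m => √(quadForm (Q j) (blockTail blk j v))
  set β := fun j : Fin m => √(quadForm (Q j) (blockTail blk (j + 1) v))
  set s := specNorm (Qtilde blk Q)
  have hQtilde : ∑ j, (α j ^ 2 + β j ^ 2) = quadForm (Qtilde blk Q) v := by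
    simp only [Qtilde, quadForm_sum, quadForm_add, α, β,
      Real.sq_sqrt ((hpsd _).quadForm_nonneg _)]
    exact Finset.sum_congr rfl fun j _ => by rw [quadForm_keepGE_succ, quadForm_keepGE_succ]
  have hsq : ∑ j, ((α j + β j) / 2) ^ 2 ≤ s / 2 * ‖v‖ ^ 2 :=
    calc ∑ j, ((α j + β j) / 2) ^ 2 ≤ ∑ j, (α j ^ 2 + β j ^ 2) / 2 :=
          Finset.sum_le_sum fun j _ => by nlinarith [sq_nonneg (α j - β j)]
      _ = quadForm (Qtilde blk Q) v / 2 := by rw [← hQtilde, Finset.sum_div]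
      _ ≤ s / 2 * ‖v‖ ^ 2 := by linarith [quadForm_le_specNorm (Qtilde blk Q) v]
  calc ∑ j, (α j + β j) / 2 * ‖blockMask blk j v‖
      ≤ √(∑ j, ((α j + β j) / 2) ^ 2) * √(∑ j, ‖blockMask blk j v‖ ^ 2) :=
        Real.sum_mul_le_sqrt_mul_sqrt _ _ _
    _ ≤ √(s / 2 * ‖v‖ ^ 2) * ‖v‖ := by
        rw [sum_norm_sq_blockMask, Real.sqrt_sq (norm_nonneg _)]
        gcongr
    _ = bigL blk Q / 2 * ‖v‖ ^ 2 := by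
        rw [Real.sqrt_mul' _ (sq_nonneg _), Real.sqrt_sq (norm_nonneg _), bigL,
          show 2 * s = 2 ^ 2 * (s / 2) by ring, Real.sqrt_mul (sq_nonneg 2),
          Real.sqrt_sq zero_le_two]
        ring

theorem BlockLip.descent (hdiff : Differentiable ℝ f) (hpsd : ∀ j, (Q j).PosSemidef)
    (hlip : BlockLip blk f Q) (a b : Euc d) :
    f b ≤ f a + ⟪gradient f a, b - a⟫ + bigL blk Q / 2 * ‖b - a‖ ^ 2 := by
  set v := a - b
  have htelescope : ∑ j : Fin m, (f (a - blockTail blk (j + 1) v) - f (a - blockTail blk j v)) =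
      f a - f b := by
    rw [Fin.sum_univ_eq_sum_range
        (fun j => f (a - blockTail blk (j + 1) v) - f (a - blockTail blk j v)),
      Finset.sum_range_sub (fun j => f (a - blockTail blk j v)), blockTail_of_le blk le_rfl,
      blockTail_zero, sub_zero, sub_sub_cancel]
  have hinner : ∑ j, ⟪gradient f a, blockMask blk j v⟫ = ⟪gradient f a, v⟫ := by
    rw [← inner_sum, sum_blockMask]
  have hsteps := Finset.sum_le_sum fun j (_ : j ∈ Finset.univ) =>
    hlip.inner_blockMask_sub_le_sub hdiff hpsd a v j
  rw [Finset.sum_sub_distrib, hinner, htelescope] at hsteps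
  have hweights := sum_sqrt_quadForm_blockTail_mul_norm_le (blk := blk) hpsd v
  rw [← neg_sub a b, inner_neg_right, norm_neg]
  linarith

end BlockDescent

theorem stmt1_general {d m : ℕ} (blk : Fin d → Fin m)
    (f : Euc d → ℝ) (hconv : ConvexOn ℝ Set.univ f) (hdiff : Differentiable ℝ f)
    (Q : Fin m → Matrix (Fin d) (Fin d) ℝ) (hpsd : ∀ j, (Q j).PosSemidef)
    (hlip : BlockLip blk f Q) :
    ∀ x y : Euc d,
      ‖gradient f y - gradient f x‖ ^ 2 ≤
        2 * bigL blk Q * (f y - f x - ⟪gradient f x, y - x⟫) :=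
  sq_norm_gradient_sub_le_of_convexOn (Real.sqrt_nonneg _) hconv hdiff (hlip.descent hdiff hpsd)

theorem stmt1 {d m : ℕ} (blk : Fin d → Fin m) (hmono : Monotone blk)
    (hsurj : Function.Surjective blk)
    (f : Euc d → ℝ) (hconv : ConvexOn ℝ Set.univ f) (hdiff : Differentiable ℝ f)
    (Q : Fin m → Matrix (Fin d) (Fin d) ℝ) (hpsd : ∀ j, (Q j).PosSemidef)
    (hlip : BlockLip blk f Q) :
    ∀ x y : Euc d,
      ‖gradient f y - gradient f x‖ ^ 2 ≤
        2 * bigL blk Q * (f y - f x - ⟪gradient f x, y - x⟫) :=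
  stmt1_general blk f hconv hdiff Q hpsd hlip
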